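/- arXiv:2509.18583 — 7 statements merged into one kernel-verified Lean document; each statement's English description precedes it below -/
import Mathlib

section
/- Let A and B be Hermitian d×d complex matrices and let r be a real number. Then ‖exp(−i r B) · exp(−i r A) − exp(−i r (A + B))‖ ≤ (r²/2) · ‖B·A − A·B‖. -/
/-!
Let `K(t) = exp(itH) exp(-itB) exp(-itA)` with `H = A + B`. Differentiating and using that each
generator commutes with its own exponential gives `K'(t) = i exp(itH) [A, exp(-itB)] exp(-itA)`,
whose norm is `‖[A, exp(-itB)]‖` because the outer factors are unitary. The same argument applied
to `s ↦ exp(-isB) A exp(isB)` bounds that commutator by `|t| ‖[B, A]‖`. The mean value inequality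
then gives `‖K(r) - 1‖ ≤ r²/2 ‖[B, A]‖`, and `exp(-irB) exp(-irA) - exp(-irH) = exp(-irH) (K(r) - 1)`.
-/

open NormedSpace
open Complex (I)

theorem norm_sub_le_of_norm_deriv_le_mul_abs {E : Type*} [NormedAddCommGroup E]
    [NormedSpace ℝ E] {f f' : ℝ → E} {C : ℝ} (hf : ∀ t, HasDerivAt f (f' t) t)
    (bound : ∀ t, ‖f' t‖ ≤ |t| * C) (r : ℝ) :
    ‖f r - f 0‖ ≤ r ^ 2 / 2 * C := by
  wlog hr : 0 ≤ r generalizing f f' r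
  · have hf_neg : ∀ t, HasDerivAt (fun s => f (-s)) (-f' (-t)) t := fun t => by
      simpa [Function.comp_def] using (hf (-t)).scomp t (hasDerivAt_neg t)
    simpa using this hf_neg (fun t => by simpa using bound (-t)) (-r) (by linarith)
  have hB : ∀ t, HasDerivAt (fun s : ℝ => s ^ 2 / 2 * C) (t * C) t := fun t => by
    simpa using ((hasDerivAt_pow 2 t).div_const 2).mul_const C
  exact image_norm_le_of_norm_deriv_right_le_deriv_boundary (f := fun s => f s - f 0)
    (fun t _ => ((hf t).sub_const _).continuousAt.continuousWithinAt)
    (fun t _ => ((hf t).sub_const _).hasDerivWithinAt) (by simp) hB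
    (fun t ht => (bound t).trans_eq (by rw [abs_of_nonneg ht.1])) ⟨hr, le_rfl⟩

section CStarAlgebra

variable {𝔸 : Type*} [CStarAlgebra 𝔸]

theorem exp_smul_mem_unitary {c : ℂ} (hc : star c = -c) {a : 𝔸} (ha : IsSelfAdjoint a) :
    exp (c • a) ∈ unitary 𝔸 :=
  -- the `exp` API needs a normed `ℚ`-algebra structure, which a C⋆-algebra gets by restriction
  let : NormedAlgebra ℚ 𝔸 := .restrictScalars ℚ ℂ 𝔸
  exp_mem_unitary_of_mem_skewAdjoint (ha.smul_mem_skewAdjoint hc)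

theorem exp_I_mul_ofReal_smul_mem_unitary {a : 𝔸} (ha : IsSelfAdjoint a) (t : ℝ) :
    exp ((I * t) • a) ∈ unitary 𝔸 :=
  exp_smul_mem_unitary (by simp) ha

theorem exp_neg_I_mul_ofReal_smul_mem_unitary {a : 𝔸} (ha : IsSelfAdjoint a) (t : ℝ) :
    exp ((-I * t) • a) ∈ unitary 𝔸 :=
  exp_smul_mem_unitary (by simp) ha

theorem exp_smul_mul_exp_neg_smul (z : ℂ) (a : 𝔸) : exp (z • a) * exp (-z • a) = 1 := by
  let : NormedAlgebra ℚ 𝔸 := .restrictScalars ℚ ℂ 𝔸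
  rw [neg_smul, ← exp_add_of_commute (Commute.refl _).neg_right, add_neg_cancel, exp_zero]

theorem hasDerivAt_exp_mul_ofReal_smul (c : ℂ) (a : 𝔸) (t : ℝ) :
    HasDerivAt (fun s : ℝ => exp ((c * s) • a)) (exp ((c * t) • a) * (c • a)) t := by
  simpa only [← Complex.coe_smul, smul_smul, mul_comm] using
    hasDerivAt_exp_smul_const (𝕂 := ℝ) (c • a) t

theorem norm_exp_smul_mul_sub_mul_exp_smul_le {b : 𝔸} (hb : IsSelfAdjoint b) (x : 𝔸) (t : ℝ) :
    ‖exp ((-I * t) • b) * x - x * exp ((-I * t) • b)‖ ≤ |t| * ‖b * x - x * b‖ := by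
  set u : ℝ → 𝔸 := fun s => exp ((-I * s) • b)
  set v : ℝ → 𝔸 := fun s => exp ((I * s) • b)
  have hvu : ∀ s, v s * u s = 1 := fun s => by
    simpa [u, v] using exp_smul_mul_exp_neg_smul (I * s) b
  have hderiv : ∀ s, HasDerivAt (fun s => u s * x * v s)
      (u s * (-I • (b * x - x * b)) * v s) s := fun s => by
    refine (((hasDerivAt_exp_mul_ofReal_smul (-I) b s).mul_const x).mul
      (hasDerivAt_exp_mul_ofReal_smul I b s)).congr_deriv ?_
    have hcomm : Commute (exp ((I * s) • b)) (I • b) :=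
      ((Commute.refl b).smul_left _ |>.smul_right _).exp_left
    simp only [u, v]
    rw [hcomm.eq]
    simp only [smul_sub, mul_sub, sub_mul, smul_mul_assoc, mul_smul_comm, neg_smul, mul_neg,
      neg_mul, mul_assoc]
    abel
  have hnorm : ∀ s, ‖u s * (-I • (b * x - x * b)) * v s‖ = ‖b * x - x * b‖ := fun s => by
    rw [CStarRing.norm_mul_mem_unitary _ (exp_I_mul_ofReal_smul_mem_unitary hb s),
      CStarRing.norm_mem_unitary_mul _ (exp_neg_I_mul_ofReal_smul_mem_unitary hb s),
      norm_smul, norm_neg, Complex.norm_I, one_mul]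
  have hmvt := convex_univ.norm_image_sub_le_of_norm_hasDerivWithin_le
    (fun s _ => (hderiv s).hasDerivWithinAt) (fun s _ => (hnorm s).le) (Set.mem_univ 0)
    (Set.mem_univ t)
  calc ‖u t * x - x * u t‖ = ‖(u t * x * v t - x) * u t‖ := by
        rw [sub_mul, mul_assoc (u t * x), hvu, mul_one]
    _ = ‖u t * x * v t - x‖ :=
        CStarRing.norm_mul_mem_unitary _ (exp_neg_I_mul_ofReal_smul_mem_unitary hb t)
    _ ≤ |t| * ‖b * x - x * b‖ := by simpa [u, v, mul_comm] using hmvt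

theorem norm_exp_smul_mul_exp_smul_sub_exp_smul_add_le {a b : 𝔸} (ha : IsSelfAdjoint a)
    (hb : IsSelfAdjoint b) (r : ℝ) :
    ‖exp ((-I * r) • b) * exp ((-I * r) • a) - exp ((-I * r) • (a + b))‖ ≤
      r ^ 2 / 2 * ‖b * a - a * b‖ := by
  have hab : IsSelfAdjoint (a + b) := ha.add hb
  set K : ℝ → 𝔸 := fun s => exp ((I * s) • (a + b)) * (exp ((-I * s) • b) * exp ((-I * s) • a))
  have hderiv : ∀ s : ℝ, HasDerivAt K (exp ((I * s) • (a + b)) *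
      (I • (a * exp ((-I * s) • b) - exp ((-I * s) • b) * a)) * exp ((-I * s) • a)) s := by
    intro s
    refine ((hasDerivAt_exp_mul_ofReal_smul I (a + b) s).mul
      ((hasDerivAt_exp_mul_ofReal_smul (-I) b s).mul
        (hasDerivAt_exp_mul_ofReal_smul (-I) a s))).congr_deriv ?_
    have hb_comm : Commute b (exp ((-I * s) • b)) := ((Commute.refl b).smul_right _).exp_right
    have ha_comm : Commute a (exp ((-I * s) • a)) := ((Commute.refl a).smul_right _).exp_right
    simp only [Pi.mul_apply]
    set eH := exp ((I * s) • (a + b))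
    set eB := exp ((-I * s) • b)
    set eA := exp ((-I * s) • a)
    simp only [smul_add, smul_sub, add_mul, mul_add, sub_mul, mul_sub, smul_mul_assoc,
      mul_smul_comm, neg_smul, mul_neg, neg_mul, mul_assoc, ← hb_comm.eq, ha_comm.eq]
    abel
  have hbound : ∀ s : ℝ, ‖exp ((I * s) • (a + b)) *
      (I • (a * exp ((-I * s) • b) - exp ((-I * s) • b) * a)) * exp ((-I * s) • a)‖ ≤
      |s| * ‖b * a - a * b‖ := by
    intro s
    rw [CStarRing.norm_mul_mem_unitary _ (exp_neg_I_mul_ofReal_smul_mem_unitary ha s),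
      CStarRing.norm_mem_unitary_mul _ (exp_I_mul_ofReal_smul_mem_unitary hab s),
      norm_smul, Complex.norm_I, one_mul, norm_sub_rev]
    exact norm_exp_smul_mul_sub_mul_exp_smul_le hb a s
  have hK : ‖K r - 1‖ ≤ r ^ 2 / 2 * ‖b * a - a * b‖ := by
    simpa [K] using norm_sub_le_of_norm_deriv_le_mul_abs hderiv hbound r
  have hinv : exp ((-I * r) • (a + b)) * exp ((I * r) • (a + b)) = 1 := by
    simpa using exp_smul_mul_exp_neg_smul (-I * r) (a + b)
  calc _ = ‖exp ((-I * r) • (a + b)) * (K r - 1)‖ := by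
        rw [mul_sub, mul_one, ← mul_assoc, hinv, one_mul]
    _ = ‖K r - 1‖ :=
        CStarRing.norm_mem_unitary_mul _ (exp_neg_I_mul_ofReal_smul_mem_unitary hab r)
    _ ≤ _ := hK

end CStarAlgebra

open scoped Matrix.Norms.L2Operator

/-- **Two-term Trotter commutator bound.**
For Hermitian `d × d` complex matrices `A` and `B` and a real time `r`, the ℓ²
operator-norm distance between `exp (-i r B) * exp (-i r A)` and `exp (-i r (A + B))`
is at most `(r² / 2) * ‖B * A - A * B‖`. -/
theorem trotter_two_term_bound {d : ℕ} (A B : Matrix (Fin d) (Fin d) ℂ)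
    (hA : A.IsHermitian) (hB : B.IsHermitian) (r : ℝ) :
    ‖NormedSpace.exp ((-(Complex.I * r)) • B) * NormedSpace.exp ((-(Complex.I * r)) • A) -
        NormedSpace.exp ((-(Complex.I * r)) • (A + B))‖ ≤
      r ^ 2 / 2 * ‖B * A - A * B‖ := by
  simpa only [neg_mul] using norm_exp_smul_mul_exp_smul_sub_exp_smul_add_le
    hA.isSelfAdjoint hB.isSelfAdjoint r
end

section
/- Let N ≥ 1 and m ≥ 1, let H_1, …, H_N be Hermitian d×d complex matrices and let r be a real number. Let U := exp(−i (r/m) H_N) ⋯ exp(−i (r/m) H_1). Then ‖U^m − exp(−i r (H_1 + ⋯ + H_N))‖ ≤ (r²/(2m)) · Σ_{k=1}^{N} ‖(Σ_{j=k+1}^{N} H_j)·H_k − H_k·(Σ_{j=k+1}^{N} H_j)‖. -/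
/-!
A single Trotter step is handled by peeling off the first factor:
`P * exp a₀ - exp (a₀ + T) = (P - exp T) * exp a₀ + (exp T * exp a₀ - exp (a₀ + T))`,
where `T` is the sum of the remaining terms. The first summand is controlled by induction, since
`exp a₀` is unitary. For the second, `f u = exp (-u (a + b)) exp (u b) exp (u a)` has derivative
`exp (-u (a + b)) [exp (u b), a] exp (u a)`, and `‖[exp (u b), a]‖ ≤ u ‖[b, a]‖` by the same
argument one level down; integrating over `[0, 1]` gives
`‖exp b exp a - exp (a + b)‖ ≤ ‖[b, a]‖ / 2`. Finally `‖U ^ m - V ^ m‖ ≤ m ‖U - V‖` for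
contractions `U`, `V`, applied to one step of length `r / m`.
-/

open scoped Matrix.Norms.L2Operator
open NormedSpace Finset

theorem norm_pow_sub_pow_le_of_norm_le_one {R : Type*} [NormedRing R] {a b : R}
    (ha : ‖a‖ ≤ 1) (hb : ‖b‖ ≤ 1) (m : ℕ) : ‖a ^ m - b ^ m‖ ≤ m * ‖a - b‖ := by
  rcases Nat.eq_zero_or_pos m with rfl | hm
  · simp
  induction m, hm using Nat.le_induction with
  | base => simp
  | succ n hn ih =>
    have han : ‖a ^ n‖ ≤ 1 := (norm_pow_le' a hn).trans (pow_le_one₀ (norm_nonneg a) ha)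
    calc ‖a ^ (n + 1) - b ^ (n + 1)‖
        = ‖a ^ n * (a - b) + (a ^ n - b ^ n) * b‖ := by
          rw [pow_succ, pow_succ]; noncomm_ring
      _ ≤ ‖a ^ n‖ * ‖a - b‖ + ‖a ^ n - b ^ n‖ * ‖b‖ :=
          (norm_add_le _ _).trans (add_le_add (norm_mul_le _ _) (norm_mul_le _ _))
      _ ≤ 1 * ‖a - b‖ + n * ‖a - b‖ * 1 := by gcongr
      _ = (n + 1 : ℕ) * ‖a - b‖ := by push_cast; ring

section IsometricGroup

variable {𝔸 : Type*} [NormedRing 𝔸] [NormedAlgebra ℝ 𝔸] [CompleteSpace 𝔸]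

theorem hasDerivAt_exp_smul_mul_exp_smul (a b : 𝔸) (s u : ℝ) :
    HasDerivAt (fun u : ℝ => exp (u • b) * a * exp ((s - u) • b))
      (exp (u • b) * (b * a - a * b) * exp ((s - u) • b)) u := by
  have hleft := (hasDerivAt_exp_smul_const b u).mul_const a
  have hright : HasDerivAt (fun u : ℝ => exp ((s - u) • b)) (-(b * exp ((s - u) • b))) u := by
    simpa [Function.comp_def] using
      (hasDerivAt_exp_smul_const' b (s - u)).scomp u ((hasDerivAt_id u).const_sub s)
  refine (hleft.mul hright).congr_deriv ?_
  noncomm_ring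

theorem norm_exp_smul_mul_sub_mul_exp_smul_le_s3 {a b : 𝔸}
    (hb : ∀ u : ℝ, ‖exp (u • b)‖ ≤ 1) (s : ℝ) :
    ‖exp (s • b) * a - a * exp (s • b)‖ ≤ |s| * ‖b * a - a * b‖ := by
  have bound : ∀ u ∈ Set.univ,
      ‖exp (u • b) * (b * a - a * b) * exp ((s - u) • b)‖ ≤ ‖b * a - a * b‖ := by
    intro u _
    calc _ ≤ ‖exp (u • b)‖ * ‖b * a - a * b‖ * ‖exp ((s - u) • b)‖ := norm_mul₃_le
      _ ≤ 1 * ‖b * a - a * b‖ * 1 := by gcongr <;> apply hb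
      _ = _ := by ring
  have hmvt := convex_univ.norm_image_sub_le_of_norm_hasDerivWithin_le
    (fun u _ => (hasDerivAt_exp_smul_mul_exp_smul a b s u).hasDerivWithinAt) bound
    (Set.mem_univ 0) (Set.mem_univ s)
  simpa [mul_comm |s|] using hmvt

theorem hasDerivAt_exp_smul_neg_add_mul_exp_smul_mul_exp_smul (a b : 𝔸) (u : ℝ) :
    HasDerivAt (fun u : ℝ => exp (u • -(a + b)) * exp (u • b) * exp (u • a))
      (exp (u • -(a + b)) * (exp (u • b) * a - a * exp (u • b)) * exp (u • a)) u := by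
  refine (((hasDerivAt_exp_smul_const (-(a + b)) u).mul (hasDerivAt_exp_smul_const' b u)).mul
    (hasDerivAt_exp_smul_const' a u)).congr_deriv ?_
  simp only [Pi.mul_apply]
  noncomm_ring

theorem norm_exp_mul_exp_sub_exp_add_le {a b : 𝔸} (ha : ∀ u : ℝ, ‖exp (u • a)‖ ≤ 1)
    (hb : ∀ u : ℝ, ‖exp (u • b)‖ ≤ 1) (hab : ∀ u : ℝ, ‖exp (u • (a + b))‖ ≤ 1) :
    ‖exp b * exp a - exp (a + b)‖ ≤ ‖b * a - a * b‖ / 2 := by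
  set f : ℝ → 𝔸 := fun u => exp (u • -(a + b)) * exp (u • b) * exp (u • a)
  have hf := hasDerivAt_exp_smul_neg_add_mul_exp_smul_mul_exp_smul a b
  have hf'_le : ∀ u ∈ Set.Ico (0 : ℝ) 1,
      ‖exp (u • -(a + b)) * (exp (u • b) * a - a * exp (u • b)) * exp (u • a)‖
        ≤ ‖b * a - a * b‖ * u := by
    intro u hu
    calc _ ≤ ‖exp (u • -(a + b))‖ * ‖exp (u • b) * a - a * exp (u • b)‖ * ‖exp (u • a)‖ :=
          norm_mul₃_le
      _ ≤ 1 * (|u| * ‖b * a - a * b‖) * 1 := by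
          gcongr
          · rw [smul_neg, ← neg_smul]; exact hab (-u)
          · exact norm_exp_smul_mul_sub_mul_exp_smul_le_s3 hb u
          · exact ha u
      _ = _ := by rw [abs_of_nonneg hu.1]; ring
  have hB : ∀ u : ℝ,
      HasDerivAt (fun u => ‖b * a - a * b‖ * (u ^ 2 / 2)) (‖b * a - a * b‖ * u) u := by
    intro u
    simpa using ((hasDerivAt_pow 2 u).div_const 2).const_mul ‖b * a - a * b‖
  have hf1 : ‖f 1 - f 0‖ ≤ ‖b * a - a * b‖ / 2 := by
    have hfence := image_norm_le_of_norm_deriv_right_le_deriv_boundary (f := fun u => f u - f 0)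
      (fun u _ => ((hf u).sub_const (f 0)).continuousAt.continuousWithinAt)
      (fun u _ => ((hf u).sub_const (f 0)).hasDerivWithinAt) (by simp) hB hf'_le
      (Set.right_mem_Icc.2 zero_le_one)
    simpa [div_eq_mul_inv] using hfence
  let _ : NormedAlgebra ℚ 𝔸 := NormedAlgebra.restrictScalars ℚ ℝ 𝔸
  have hexp : exp b * exp a - exp (a + b) = exp (a + b) * (f 1 - f 0) := by
    simp only [f, one_smul, zero_smul, exp_zero, mul_one, mul_sub, ← mul_assoc]
    rw [← exp_add_of_commute (Commute.refl (a + b)).neg_right, add_neg_cancel, exp_zero, one_mul]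
  calc ‖exp b * exp a - exp (a + b)‖ ≤ ‖exp (a + b)‖ * ‖f 1 - f 0‖ := hexp ▸ norm_mul_le _ _
    _ ≤ 1 * (‖b * a - a * b‖ / 2) := by
        gcongr
        simpa using hab 1
    _ = _ := one_mul _

end IsometricGroup

theorem CStarRing.norm_le_one_of_mem_unitary {E : Type*} [NormedRing E] [StarRing E]
    [CStarRing E] {U : E} (hU : U ∈ unitary E) : ‖U‖ ≤ 1 := by
  cases subsingleton_or_nontrivial E
  · simp [Subsingleton.elim U 0]
  · exact (norm_of_mem_unitary hU).le

theorem List.prod_map_reverse_range_succ {M : Type*} [Monoid M] (f : ℕ → M) (N : ℕ) :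
    ((List.range (N + 1)).reverse.map f).prod
      = ((List.range N).reverse.map fun k => f (k + 1)).prod * f 0 := by
  simp [List.range_succ_eq_map, List.map_reverse, Function.comp_def]

theorem Finset.sum_Ioo_add_one_add_one {M : Type*} [AddCommMonoid M] (f : ℕ → M) (k N : ℕ) :
    ∑ j ∈ Ioo (k + 1) (N + 1), f j = ∑ j ∈ Ioo k N, f (j + 1) := by
  rw [← map_add_right_Ioo k N 1, sum_map]
  rfl

theorem Finset.sum_Ioo_zero_add_one {M : Type*} [AddCommMonoid M] (f : ℕ → M) (N : ℕ) :
    ∑ j ∈ Ioo 0 (N + 1), f j = ∑ j ∈ range N, f (j + 1) := by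
  rw [← Finset.Ico_add_one_left_eq_Ioo, sum_Ico_eq_sum_range]
  simp [add_comm]

section CStarAlgebra

variable {A : Type*} [CStarAlgebra A]

-- Mathlib's `exp_mem_unitary_of_mem_skewAdjoint` asks for a `NormedAlgebra ℚ A` instance.
theorem exp_mem_unitary_of_mem_skewAdjoint' {a : A} (ha : a ∈ skewAdjoint A) :
    exp a ∈ unitary A :=
  let _ : NormedAlgebra ℚ A := NormedAlgebra.restrictScalars ℚ ℂ A
  exp_mem_unitary_of_mem_skewAdjoint ha

theorem norm_exp_le_one_of_mem_skewAdjoint {a : A} (ha : a ∈ skewAdjoint A) : ‖exp a‖ ≤ 1 :=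
  CStarRing.norm_le_one_of_mem_unitary (exp_mem_unitary_of_mem_skewAdjoint' ha)

theorem norm_exp_smul_le_one_of_mem_skewAdjoint {a : A} (ha : a ∈ skewAdjoint A) (u : ℝ) :
    ‖exp (u • a)‖ ≤ 1 :=
  norm_exp_le_one_of_mem_skewAdjoint (skewAdjoint.smul_mem u ha)

theorem norm_exp_mul_exp_sub_exp_add_le_of_mem_skewAdjoint {a b : A} (ha : a ∈ skewAdjoint A)
    (hb : b ∈ skewAdjoint A) : ‖exp b * exp a - exp (a + b)‖ ≤ ‖b * a - a * b‖ / 2 :=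
  norm_exp_mul_exp_sub_exp_add_le (norm_exp_smul_le_one_of_mem_skewAdjoint ha)
    (norm_exp_smul_le_one_of_mem_skewAdjoint hb)
    (norm_exp_smul_le_one_of_mem_skewAdjoint (add_mem ha hb))

theorem norm_prod_exp_le_one_of_mem_skewAdjoint {a : ℕ → A} (ha : ∀ k, a k ∈ skewAdjoint A)
    (l : List ℕ) : ‖(l.map fun k => exp (a k)).prod‖ ≤ 1 :=
  CStarRing.norm_le_one_of_mem_unitary <| Submonoid.list_prod_mem _ <| by
    simpa using fun k _ => exp_mem_unitary_of_mem_skewAdjoint' (ha k)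

theorem norm_prod_exp_sub_exp_sum_le {a : ℕ → A} (ha : ∀ k, a k ∈ skewAdjoint A) (N : ℕ) :
    ‖((List.range N).reverse.map fun k => exp (a k)).prod - exp (∑ k ∈ range N, a k)‖ ≤
      (∑ k ∈ range N, ‖(∑ j ∈ Ioo k N, a j) * a k - a k * ∑ j ∈ Ioo k N, a j‖) / 2 := by
  induction N generalizing a with
  | zero => simp
  | succ N ih =>
    set P := ((List.range N).reverse.map fun k => exp (a (k + 1))).prod
    set T := ∑ k ∈ range N, a (k + 1)
    have hT : T ∈ skewAdjoint A := sum_mem fun k _ => ha (k + 1)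
    have hsplit : P * exp (a 0) - exp (a 0 + T)
        = (P - exp T) * exp (a 0) + (exp T * exp (a 0) - exp (a 0 + T)) := by noncomm_ring
    rw [List.prod_map_reverse_range_succ, sum_range_succ', add_comm, hsplit, sum_range_succ',
      sum_Ioo_zero_add_one]
    simp only [sum_Ioo_add_one_add_one]
    calc _ ≤ ‖P - exp T‖ * ‖exp (a 0)‖ + ‖exp T * exp (a 0) - exp (a 0 + T)‖ :=
          (norm_add_le _ _).trans (add_le_add_left (norm_mul_le _ _) _)
      _ ≤ (∑ k ∈ range N, ‖(∑ j ∈ Ioo k N, a (j + 1)) * a (k + 1)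
            - a (k + 1) * ∑ j ∈ Ioo k N, a (j + 1)‖) / 2 * 1 + ‖T * a 0 - a 0 * T‖ / 2 := by
          gcongr
          · exact ih fun k => ha (k + 1)
          · exact norm_exp_le_one_of_mem_skewAdjoint (ha 0)
          · exact norm_exp_mul_exp_sub_exp_add_le_of_mem_skewAdjoint (ha 0) hT
      _ = _ := by ring

end CStarAlgebra

theorem trotterization_repeated_error_bound_general {d N m : ℕ} (hm : 1 ≤ m)
    (H : ℕ → Matrix (Fin d) (Fin d) ℂ) (hH : ∀ k, (H k).IsHermitian) (r : ℝ) :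
    ‖(((List.range N).reverse.map
            (fun k => NormedSpace.exp ((-(Complex.I * (r / m))) • H k))).prod) ^ m -
        NormedSpace.exp ((-(Complex.I * r)) • ∑ k ∈ Finset.range N, H k)‖ ≤
      r ^ 2 / (2 * m) * ∑ k ∈ Finset.range N,
        ‖(∑ j ∈ Finset.Ioo k N, H j) * H k - H k * ∑ j ∈ Finset.Ioo k N, H j‖ := by
  set c : ℂ := -(Complex.I * (r / m))
  have hm0 : (m : ℂ) ≠ 0 := by exact_mod_cast (Nat.one_le_iff_ne_zero.1 hm)
  have hc : star c = -c := by simp [c, Complex.conj_ofReal]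
  have hskew : ∀ k, c • H k ∈ skewAdjoint (Matrix (Fin d) (Fin d) ℂ) := fun k =>
    (hH k).isSelfAdjoint.smul_mem_skewAdjoint hc
  have hexp : exp ((-(Complex.I * r)) • ∑ k ∈ range N, H k)
      = exp (∑ k ∈ range N, c • H k) ^ m := by
    rw [← Matrix.exp_nsmul, ← smul_sum, ← Nat.cast_smul_eq_nsmul ℂ, smul_smul]
    congr 2
    simp only [c]
    field_simp
  have hcomm : ∀ x y : Matrix (Fin d) (Fin d) ℂ,
      ‖(c • x) * (c • y) - (c • y) * (c • x)‖ = (r / m) ^ 2 * ‖x * y - y * x‖ := by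
    intro x y
    rw [smul_mul_smul_comm, smul_mul_smul_comm, ← smul_sub, norm_smul, ← sq, norm_pow]
    simp [c, div_pow]
  rw [hexp]
  calc _ ≤ m * ‖((List.range N).reverse.map fun k => exp (c • H k)).prod
          - exp (∑ k ∈ range N, c • H k)‖ :=
        norm_pow_sub_pow_le_of_norm_le_one (norm_prod_exp_le_one_of_mem_skewAdjoint hskew _)
          (norm_exp_le_one_of_mem_skewAdjoint (sum_mem fun k _ => hskew k)) m
    _ ≤ m * ((∑ k ∈ range N, ‖(∑ j ∈ Ioo k N, c • H j) * (c • H k)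
          - (c • H k) * ∑ j ∈ Ioo k N, c • H j‖) / 2) := by
        gcongr
        exact norm_prod_exp_sub_exp_sum_le hskew N
    _ = _ := by
        simp only [← smul_sum, hcomm, ← mul_sum]
        field_simp

/-- **Correctness of `m`-step first-order Trotterization.**
For `N ≥ 1` Hermitian `d × d` complex matrices `H 0, …, H (N-1)` (representing
`H_1, …, H_N`), `m ≥ 1` steps and a real time `r`, let
`U = exp (-i (r/m) H_N) ⋯ exp (-i (r/m) H_1)`.  Then
`‖U ^ m - exp (-i r (H_1 + ⋯ + H_N))‖` is at most
`(r² / (2 m)) * Σ_{k=1}^{N} ‖(Σ_{j=k+1}^{N} H_j) * H_k - H_k * (Σ_{j=k+1}^{N} H_j)‖`. -/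
theorem trotterization_repeated_error_bound {d N m : ℕ} (hN : 1 ≤ N) (hm : 1 ≤ m)
    (H : ℕ → Matrix (Fin d) (Fin d) ℂ) (hH : ∀ k, (H k).IsHermitian) (r : ℝ) :
    ‖(((List.range N).reverse.map
            (fun k => NormedSpace.exp ((-(Complex.I * (r / m))) • H k))).prod) ^ m -
        NormedSpace.exp ((-(Complex.I * r)) • ∑ k ∈ Finset.range N, H k)‖ ≤
      r ^ 2 / (2 * m) * ∑ k ∈ Finset.range N,
        ‖(∑ j ∈ Finset.Ioo k N, H j) * H k - H k * ∑ j ∈ Finset.Ioo k N, H j‖ :=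
  trotterization_repeated_error_bound_general hm H hH r
end

section
/- Let A and B be d×d complex matrices. Then the sequence m ↦ (exp(A/m) · exp(B/m))^m converges, as m → ∞, to exp(A + B). -/
open scoped Matrix.Norms.L2Operator

/-!
Write `T = exp (x/m) exp (y/m)` and `S = exp ((x + y)/m)`, so that `exp (x + y) = S ^ m`.
Differentiating at `t = 0` shows `exp (t x) exp (t y) - exp (t (x + y)) = o(t)`, hence
`m ‖T - S‖ → 0`. Both `T` and `S` have norm at most `exp ((‖x‖ + ‖y‖)/m)`, so telescoping
`T ^ m - S ^ m` gives `‖T ^ m - S ^ m‖ ≤ exp (‖x‖ + ‖y‖) · m ‖T - S‖ → 0`.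
-/

open Filter Topology NormedSpace

theorem norm_exp_le_exp_norm {𝔸 : Type*} [NormedRing 𝔸] [NormOneClass 𝔸] [NormedAlgebra ℚ 𝔸]
    [CompleteSpace 𝔸] (x : 𝔸) : ‖exp x‖ ≤ Real.exp ‖x‖ := by
  rw [exp_eq_tsum ℚ, Real.exp_eq_exp_ℝ]
  refine tsum_of_norm_bounded (expSeries_div_hasSum_exp ‖x‖) fun n => ?_
  rw [norm_smul, norm_inv, ← Rat.norm_cast_real, Rat.cast_natCast, Real.norm_natCast,
    inv_mul_eq_div]
  gcongr
  exact norm_pow_le x n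

theorem norm_pow_sub_pow_le {R : Type*} [SeminormedRing R] [NormOneClass R] {a b : R} {M : ℝ}
    (ha : ‖a‖ ≤ M) (hb : ‖b‖ ≤ M) (n : ℕ) :
    ‖a ^ n - b ^ n‖ ≤ n * M ^ (n - 1) * ‖a - b‖ := by
  induction n with
  | zero => simp
  | succ k ih =>
    have hM : 0 ≤ M := (norm_nonneg a).trans ha
    have hak : ‖a ^ k‖ ≤ M ^ k := (norm_pow_le a k).trans (pow_le_pow_left₀ (norm_nonneg a) ha k)
    have hkM : k * M ^ (k - 1) * M = k * M ^ k := by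
      rcases k with _ | k
      · simp
      · simp [pow_succ, mul_assoc]
    calc ‖a ^ (k + 1) - b ^ (k + 1)‖
        = ‖a ^ k * (a - b) + (a ^ k - b ^ k) * b‖ := by noncomm_ring
      _ ≤ ‖a ^ k‖ * ‖a - b‖ + ‖a ^ k - b ^ k‖ * ‖b‖ :=
        (norm_add_le _ _).trans (add_le_add (norm_mul_le _ _) (norm_mul_le _ _))
      _ ≤ M ^ k * ‖a - b‖ + k * M ^ (k - 1) * ‖a - b‖ * M := by gcongr
      _ = (k + 1 : ℕ) * M ^ (k + 1 - 1) * ‖a - b‖ := by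
        rw [mul_right_comm _ ‖a - b‖, hkM]; push_cast; ring

section BanachAlgebra

variable {𝕂 𝔸 : Type*} [RCLike 𝕂] [NormedRing 𝔸] [NormedAlgebra 𝕂 𝔸] [CompleteSpace 𝔸]

theorem tendsto_inv_smul_exp_mul_exp_sub_exp_add (x y : 𝔸) :
    Tendsto (fun t : 𝕂 => t⁻¹ • (exp (t • x) * exp (t • y) - exp (t • (x + y))))
      (𝓝[≠] 0) (𝓝 0) := by
  have hderiv : HasDerivAt (fun t : 𝕂 => exp (t • x) * exp (t • y) - exp (t • (x + y))) 0 0 := by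
    have := ((hasDerivAt_exp_smul_const x (0 : 𝕂)).mul (hasDerivAt_exp_smul_const y 0)).sub
      (hasDerivAt_exp_smul_const (x + y) 0)
    simp only [zero_smul, exp_zero, one_mul, mul_one, sub_self] at this
    exact this
  simpa using hderiv.tendsto_slope_zero

theorem tendsto_natCast_smul_exp_mul_exp_sub_exp_add (x y : 𝔸) :
    Tendsto (fun m : ℕ => (m : 𝕂) • (exp ((m : 𝕂)⁻¹ • x) * exp ((m : 𝕂)⁻¹ • y) -
      exp ((m : 𝕂)⁻¹ • (x + y)))) atTop (𝓝 0) := by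
  have hinv : Tendsto (fun m : ℕ => (m : 𝕂)⁻¹) atTop (𝓝[≠] 0) :=
    tendsto_nhdsWithin_of_tendsto_nhds_of_eventually_within _ tendsto_inv_atTop_nhds_zero_nat
      (eventually_ne_atTop 0 |>.mono fun m hm => by simpa using hm)
  simpa only [Function.comp_def, inv_inv] using
    (tendsto_inv_smul_exp_mul_exp_sub_exp_add x y).comp hinv

variable [NormOneClass 𝔸]

theorem norm_exp_mul_exp_pow_sub_exp_add_le (x y : 𝔸) {m : ℕ} (hm : m ≠ 0) :
    ‖(exp ((m : 𝕂)⁻¹ • x) * exp ((m : 𝕂)⁻¹ • y)) ^ m - exp (x + y)‖ ≤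
      Real.exp (‖x‖ + ‖y‖) * ‖(m : 𝕂) • (exp ((m : 𝕂)⁻¹ • x) * exp ((m : 𝕂)⁻¹ • y) -
        exp ((m : 𝕂)⁻¹ • (x + y)))‖ := by
  let _ : NormedAlgebra ℚ 𝔸 := .restrictScalars ℚ 𝕂 𝔸
  set t : 𝕂 := (m : 𝕂)⁻¹
  have hmt : (m : 𝕂) * t = 1 := mul_inv_cancel₀ (by exact_mod_cast hm)
  set M := Real.exp (‖t‖ * (‖x‖ + ‖y‖))
  have hM : 1 ≤ M := Real.one_le_exp (by positivity)
  have hMpow : M ^ m = Real.exp (‖x‖ + ‖y‖) := by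
    rw [← Real.exp_nat_mul, ← mul_assoc, ← RCLike.norm_natCast (K := 𝕂), ← norm_mul, hmt,
      norm_one, one_mul]
  have hexp_pow : exp (t • (x + y)) ^ m = exp (x + y) := by
    rw [← exp_nsmul, ← Nat.cast_smul_eq_nsmul 𝕂, smul_smul, hmt, one_smul]
  have hT : ‖exp (t • x) * exp (t • y)‖ ≤ M :=
    calc ‖exp (t • x) * exp (t • y)‖ ≤ Real.exp ‖t • x‖ * Real.exp ‖t • y‖ :=
          (norm_mul_le _ _).trans (by gcongr <;> exact norm_exp_le_exp_norm _)
      _ = M := by rw [← Real.exp_add, norm_smul, norm_smul, ← mul_add]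
  have hS : ‖exp (t • (x + y))‖ ≤ M :=
    (norm_exp_le_exp_norm _).trans <| Real.exp_le_exp.2 <| by
      rw [norm_smul]; gcongr; exact norm_add_le x y
  calc _ = ‖(exp (t • x) * exp (t • y)) ^ m - exp (t • (x + y)) ^ m‖ := by rw [hexp_pow]
    _ ≤ m * M ^ (m - 1) * ‖exp (t • x) * exp (t • y) - exp (t • (x + y))‖ :=
      norm_pow_sub_pow_le hT hS m
    _ ≤ m * M ^ m * ‖exp (t • x) * exp (t • y) - exp (t • (x + y))‖ := by
      gcongr
      exact Nat.sub_le m 1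
    _ = _ := by rw [hMpow, norm_smul, RCLike.norm_natCast]; ring

theorem tendsto_exp_mul_exp_pow (x y : 𝔸) :
    Tendsto (fun m : ℕ => (exp ((m : 𝕂)⁻¹ • x) * exp ((m : 𝕂)⁻¹ • y)) ^ m) atTop
      (𝓝 (exp (x + y))) := by
  rw [tendsto_iff_norm_sub_tendsto_zero]
  refine squeeze_zero' (.of_forall fun m => norm_nonneg _)
    ((eventually_ne_atTop 0).mono fun m => norm_exp_mul_exp_pow_sub_exp_add_le x y) ?_
  simpa using (tendsto_natCast_smul_exp_mul_exp_sub_exp_add (𝕂 := 𝕂) x y).norm.const_mul _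

end BanachAlgebra

/-- **Lie–Trotter product formula.**
For `d × d` complex matrices `A` and `B`, the sequence
`m ↦ (exp (A / m) * exp (B / m)) ^ m` converges (in the ℓ² operator norm,
equivalently any norm on the finite-dimensional matrix space) to `exp (A + B)`
as `m → ∞`. -/
theorem lie_trotter_product_formula {d : ℕ} (A B : Matrix (Fin d) (Fin d) ℂ) :
    Filter.Tendsto
      (fun m : ℕ =>
        ‖(NormedSpace.exp (((m : ℂ))⁻¹ • A) * NormedSpace.exp (((m : ℂ))⁻¹ • B)) ^ m -
          NormedSpace.exp (A + B)‖)
      Filter.atTop (nhds 0) := by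
  -- The ℓ² operator norm has `‖1‖ = 1` only for `d ≠ 0`; for `d = 0` all matrices vanish.
  rcases isEmpty_or_nonempty (Fin d) with _ | _
  · simp only [Subsingleton.elim _ (0 : Matrix (Fin d) (Fin d) ℂ), norm_zero]
    exact tendsto_const_nhds
  · exact tendsto_iff_norm_sub_tendsto_zero.1 (tendsto_exp_mul_exp_pow A B)
end

section
/- Let d ≥ 1, let L_1, …, L_d be D×D complex matrices with ‖L_j‖ ≤ 2 for every j, let p_1, …, p_d be nonnegative reals with Σ_j p_j = 1, let λ ≥ 0 and t ≥ 0 be reals, and set L := λ · Σ_j p_j L_j. Then ‖Σ_j p_j · exp(λ t L_j) − exp(t L)‖ ≤ 2 · Σ_{n=2}^{∞} (2λt)ⁿ/n!. -/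
open scoped Matrix.Norms.L2Operator
open Finset

/-!
Write `R(x) = exp x - 1 - x`. Since the weights sum to one, the constant and linear Taylor terms
of the averaged exponentials and of the exponential of the average cancel, so the difference is
`Σ_j p_j R(x_j) - R(Σ_j p_j x_j)` with `x_j = λt L_j`. Every `x_j`, and hence their average, lies in
the ball of radius `2λt`, on which `‖R‖` is at most the tail `Σ_{n≥2} (2λt)ⁿ/n!` of the
exponential series; the average of the `R(x_j)` obeys the same bound by convexity of the ball.
-/

lemma norm_exp_sub_one_sub_le {𝕂 𝔸 : Type*} [RCLike 𝕂] [NormedRing 𝔸] [NormedAlgebra 𝕂 𝔸]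
    [CompleteSpace 𝔸] {x : 𝔸} {c : ℝ} (hx : ‖x‖ ≤ c) :
    ‖NormedSpace.exp x - 1 - x‖ ≤ ∑' n : ℕ, c ^ (n + 2) / (n + 2).factorial := by
  have hexp := (hasSum_nat_add_iff' 2).mpr (NormedSpace.exp_series_hasSum_exp' (𝕂 := 𝕂) x)
  have hbound := (summable_nat_add_iff 2).mpr (Real.summable_pow_div_factorial c)
  simp only [sum_range_succ, sum_range_zero, Nat.factorial_zero, Nat.factorial_one, Nat.cast_one,
    inv_one, pow_zero, pow_one, one_smul, zero_add] at hexp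
  rw [sub_sub]
  refine hexp.norm_le_of_bounded hbound.hasSum fun n => ?_
  rw [norm_smul, norm_inv, RCLike.norm_natCast, inv_mul_eq_div]
  gcongr
  exact (norm_pow_le' x (by omega)).trans (pow_le_pow_left₀ (norm_nonneg x) hx _)

lemma norm_sum_smul_le_of_norm_le {ι E : Type*} [SeminormedAddCommGroup E] [NormedSpace ℝ E]
    {s : Finset ι} {p : ι → ℝ} {x : ι → E} {c : ℝ} (hp : ∀ j ∈ s, 0 ≤ p j)
    (hpsum : ∑ j ∈ s, p j = 1) (hx : ∀ j ∈ s, ‖x j‖ ≤ c) : ‖∑ j ∈ s, p j • x j‖ ≤ c := by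
  simpa using (convex_closedBall (0 : E) c).sum_mem hp hpsum fun j hj => by simpa using hx j hj

lemma sum_smul_apply_sub_apply_sum_smul {ι R M : Type*} [Semiring R] [AddCommGroup M]
    [Module R M] (s : Finset ι) {p : ι → R} (hpsum : ∑ j ∈ s, p j = 1) (f : M → M) (a : M)
    (x : ι → M) :
    ∑ j ∈ s, p j • f (x j) - f (∑ j ∈ s, p j • x j) =
      ∑ j ∈ s, p j • (f (x j) - a - x j) - (f (∑ j ∈ s, p j • x j) - a - ∑ j ∈ s, p j • x j) := by
  have ha : ∑ j ∈ s, p j • a = a := by rw [← sum_smul, hpsum, one_smul]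
  simp only [smul_sub, sum_sub_distrib, ha]
  abel

theorem qdrift_single_step_bound_general {D d : ℕ}
    (L : Fin d → Matrix (Fin D) (Fin D) ℂ) (hL : ∀ j, ‖L j‖ ≤ 2)
    (p : Fin d → ℝ) (hp : ∀ j, 0 ≤ p j) (hpsum : ∑ j, p j = 1)
    (lam t : ℝ) (hlam : 0 ≤ lam) (ht : 0 ≤ t) :
    ‖(∑ j, p j • NormedSpace.exp ((lam * t) • L j)) -
        NormedSpace.exp (t • (lam • ∑ j, p j • L j))‖ ≤
      2 * ∑' n : ℕ, (2 * lam * t) ^ (n + 2) / (Nat.factorial (n + 2)) := by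
  set x : Fin d → Matrix (Fin D) (Fin D) ℂ := fun j => (lam * t) • L j
  set r := ∑' n : ℕ, (2 * lam * t) ^ (n + 2) / (Nat.factorial (n + 2))
  have hx : ∀ j, ‖x j‖ ≤ 2 * lam * t := fun j => by
    rw [norm_smul, Real.norm_of_nonneg (by positivity), mul_comm, mul_assoc]
    gcongr
    exact hL j
  have hmean : t • (lam • ∑ j, p j • L j) = ∑ j, p j • x j := by
    simp only [x, smul_sum, smul_smul, mul_comm, mul_left_comm]
  rw [hmean, sum_smul_apply_sub_apply_sum_smul _ hpsum NormedSpace.exp 1 x]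
  calc _ ≤ ‖∑ j, p j • (NormedSpace.exp (x j) - 1 - x j)‖
        + ‖NormedSpace.exp (∑ j, p j • x j) - 1 - ∑ j, p j • x j‖ := norm_sub_le _ _
    _ ≤ r + r := by
      gcongr
      · exact norm_sum_smul_le_of_norm_le (fun j _ => hp j) hpsum
          fun j _ => norm_exp_sub_one_sub_le (𝕂 := ℂ) (hx j)
      · exact norm_exp_sub_one_sub_le (𝕂 := ℂ)
          (norm_sum_smul_le_of_norm_le (fun j _ => hp j) hpsum fun j _ => hx j)
    _ = 2 * r := by ring

/-- **QDrift single-step error bound.**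
Let `d ≥ 1`, let `L 0, …, L (d-1)` be `D × D` complex matrices of ℓ² operator norm at
most `2`, let `p` be a probability distribution on the indices, let `lam ≥ 0` and
`t ≥ 0` be reals, and set `Lsum := lam • Σ_j p j • L j`.  Then
`‖Σ_j p j • exp (lam * t • L j) - exp (t • Lsum)‖ ≤ 2 * Σ_{n=2}^∞ (2 lam t)ⁿ / n!`. -/
theorem qdrift_single_step_bound {D d : ℕ} (hd : 1 ≤ d)
    (L : Fin d → Matrix (Fin D) (Fin D) ℂ) (hL : ∀ j, ‖L j‖ ≤ 2)
    (p : Fin d → ℝ) (hp : ∀ j, 0 ≤ p j) (hpsum : ∑ j, p j = 1)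
    (lam t : ℝ) (hlam : 0 ≤ lam) (ht : 0 ≤ t) :
    ‖(∑ j, p j • NormedSpace.exp ((lam * t) • L j)) -
        NormedSpace.exp (t • (lam • ∑ j, p j • L j))‖ ≤
      2 * ∑' n : ℕ, (2 * lam * t) ^ (n + 2) / (Nat.factorial (n + 2)) :=
  qdrift_single_step_bound_general L hL p hp hpsum lam t hlam ht
end

section
/- Fix n ≥ 1. For each j with 0 ≤ j < n, define the 2ⁿ×2ⁿ complex matrix c_j as the Kronecker product Z ⊗ ⋯ ⊗ Z ⊗ a ⊗ I ⊗ ⋯ ⊗ I, with j copies of Z, one copy of a in position j, and n−1−j copies of the identity I. Then for all j, k < n: (1) c_j·c_k + c_k·c_j = 0, and (2) c_j·c_k^† + c_k^†·c_j equals the identity matrix if j = k, and equals 0 otherwise, where † denotes conjugate transpose. -/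
open scoped Matrix

/-- The `2 × 2` annihilation matrix `a = [[0,1],[0,0]]`. -/
noncomputable def annMat : Matrix (Fin 2) (Fin 2) ℂ := !![0, 1; 0, 0]

/-- The Pauli `Z` matrix `[[1,0],[0,-1]]`. -/
noncomputable def zMat : Matrix (Fin 2) (Fin 2) ℂ := !![1, 0; 0, -1]

/-- The Jordan–Wigner transformed annihilation operator on `n` sites:
`c_j = Z ⊗ ⋯ ⊗ Z ⊗ a ⊗ I ⊗ ⋯ ⊗ I`, with `j` copies of `Z`, one copy of `a` in
position `j`, and `n - 1 - j` copies of the `2 × 2` identity, realized as a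
`2ⁿ × 2ⁿ` complex matrix indexed by `n`-bit strings via the entrywise description
of the Kronecker product. -/
noncomputable def jordanWigner {n : ℕ} (j : Fin n) :
    Matrix (Fin n → Fin 2) (Fin n → Fin 2) ℂ :=
  Matrix.of fun x y =>
    ∏ k : Fin n, (if (k : ℕ) < (j : ℕ) then zMat else if k = j then annMat else 1) (x k) (y k)

/-! Each `c_j` is the Kronecker product of its site operators. For `j < k` the site operators of
`c_j` and of `c_k` (or `c_k†`) commute at every site except `j`, where `a` meets `Z` and
anticommutes with it, so the products anticommute. For `j = k` the site operators away from `j`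
are unitary, and `a a† + a† a = 1` at site `j`; additivity of the Kronecker product in a single
factor then gives the identity. -/

namespace Matrix

variable {ι α R : Type*} [Fintype ι] [CommRing R]

def piKronecker (M : ι → Matrix α α R) : Matrix (ι → α) (ι → α) R :=
  of fun x y => ∏ i, M i (x i) (y i)

theorem piKronecker_mul [DecidableEq ι] [Fintype α] (M N : ι → Matrix α α R) :
    piKronecker M * piKronecker N = piKronecker (M * N) := by
  ext x y
  simp only [piKronecker, mul_apply, of_apply, Pi.mul_apply, Fintype.prod_sum,
    Finset.prod_mul_distrib]

theorem piKronecker_one [DecidableEq α] : piKronecker (1 : ι → Matrix α α R) = 1 := by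
  ext x y
  by_cases hxy : x = y
  · subst hxy
    simp [piKronecker]
  · obtain ⟨i, hi⟩ := Function.ne_iff.mp hxy
    simp only [piKronecker, of_apply, Pi.one_apply, one_apply, hxy, if_false]
    exact Finset.prod_eq_zero (Finset.mem_univ i) (if_neg hi)

theorem piKronecker_eq_zero {M : ι → Matrix α α R} {t : ι} (ht : M t = 0) :
    piKronecker M = 0 := by
  ext x y
  exact Finset.prod_eq_zero (Finset.mem_univ t) (by simp [ht])

theorem piKronecker_add_piKronecker [DecidableEq ι] {M N P : ι → Matrix α α R} (t : ι)
    (ht : M t + N t = P t) (hM : ∀ i ≠ t, M i = P i) (hN : ∀ i ≠ t, N i = P i) :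
    piKronecker M + piKronecker N = piKronecker P := by
  ext x y
  have hrest {Q : ι → Matrix α α R} (hQ : ∀ i ≠ t, Q i = P i) :
      ∏ i ∈ {t}ᶜ, Q i (x i) (y i) = ∏ i ∈ {t}ᶜ, P i (x i) (y i) :=
    Finset.prod_congr rfl fun i hi => by rw [hQ i (by simpa using hi)]
  simp only [piKronecker, add_apply, of_apply]
  rw [Fintype.prod_eq_mul_prod_compl t, Fintype.prod_eq_mul_prod_compl t,
    Fintype.prod_eq_mul_prod_compl t, hrest hM, hrest hN, ← add_mul, ← add_apply, ht]

theorem piKronecker_anticommute [DecidableEq ι] [Fintype α] {M N : ι → Matrix α α R} (t : ι)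
    (ht : M t * N t = -(N t * M t)) (hcomm : ∀ i ≠ t, Commute (M i) (N i)) :
    piKronecker M * piKronecker N + piKronecker N * piKronecker M = 0 := by
  rw [piKronecker_mul, piKronecker_mul,
    piKronecker_add_piKronecker (P := Function.update (M * N) t 0) t _ _ _,
    piKronecker_eq_zero (Function.update_self t 0 _)]
  · simp [ht]
  · intro i hi
    simp [Function.update_of_ne hi]
  · intro i hi
    simp [Function.update_of_ne hi, (hcomm i hi).eq]

theorem piKronecker_conjTranspose [StarRing R] (M : ι → Matrix α α R) :
    (piKronecker M)ᴴ = piKronecker fun i => (M i)ᴴ := by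
  ext x y
  simp [piKronecker, conjTranspose_apply]

end Matrix

open Matrix

theorem annMat_mul_annMat : annMat * annMat = 0 := by
  ext i j; fin_cases i <;> fin_cases j <;> simp [annMat]

theorem annMat_mul_zMat : annMat * zMat = -(zMat * annMat) := by
  ext i j; fin_cases i <;> fin_cases j <;> simp [annMat, zMat]

theorem annMat_conjTranspose : annMatᴴ = !![0, 0; 1, 0] := by
  ext i j; fin_cases i <;> fin_cases j <;> simp [annMat]

theorem annMat_car : annMat * annMatᴴ + annMatᴴ * annMat = 1 := by
  rw [annMat_conjTranspose, annMat, mul_fin_two, mul_fin_two, one_fin_two]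
  simp

theorem zMat_conjTranspose : zMatᴴ = zMat := by
  ext i j; fin_cases i <;> fin_cases j <;> simp [zMat]

theorem zMat_mem_unitary : zMat ∈ unitary (Matrix (Fin 2) (Fin 2) ℂ) := by
  have hzz : zMat * zMat = 1 := by
    ext i j; fin_cases i <;> fin_cases j <;> simp [zMat]
  rw [Unitary.mem_iff, star_eq_conjTranspose, zMat_conjTranspose]
  exact ⟨hzz, hzz⟩

section JordanWigner

variable {n : ℕ}

noncomputable def jwFactor (j i : Fin n) : Matrix (Fin 2) (Fin 2) ℂ :=
  if (i : ℕ) < (j : ℕ) then zMat else if i = j then annMat else 1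

theorem jordanWigner_eq_piKronecker (j : Fin n) : jordanWigner j = piKronecker (jwFactor j) :=
  rfl

theorem jwFactor_of_lt {i j : Fin n} (h : i < j) : jwFactor j i = zMat :=
  if_pos h

theorem jwFactor_self (j : Fin n) : jwFactor j j = annMat := by
  simp [jwFactor]

theorem jwFactor_of_gt {i j : Fin n} (h : j < i) : jwFactor j i = 1 := by
  simp [jwFactor, h.not_gt, h.ne']

theorem jwFactor_mem_unitary_of_ne {i j : Fin n} (h : i ≠ j) :
    jwFactor j i ∈ unitary (Matrix (Fin 2) (Fin 2) ℂ) := by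
  rcases h.lt_or_gt with h | h
  · rw [jwFactor_of_lt h]; exact zMat_mem_unitary
  · rw [jwFactor_of_gt h]; exact one_mem _

theorem jordanWigner_conjTranspose (j : Fin n) :
    (jordanWigner j)ᴴ = piKronecker fun i => (jwFactor j i)ᴴ :=
  piKronecker_conjTranspose _

theorem jordanWigner_anticommute_of_eq_zMat {j : Fin n} {N : Fin n → Matrix (Fin 2) (Fin 2) ℂ}
    (hN : ∀ i ≤ j, N i = zMat) :
    jordanWigner j * piKronecker N + piKronecker N * jordanWigner j = 0 := by
  rw [jordanWigner_eq_piKronecker]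
  refine piKronecker_anticommute j ?_ fun i hi => ?_
  · rw [jwFactor_self, hN j le_rfl, annMat_mul_zMat]
  · rcases hi.lt_or_gt with hi | hi
    · rw [jwFactor_of_lt hi, hN i hi.le]
    · rw [jwFactor_of_gt hi]
      exact Commute.one_left _

theorem jordanWigner_anticommute_of_lt {j k : Fin n} (h : j < k) :
    jordanWigner j * jordanWigner k + jordanWigner k * jordanWigner j = 0 :=
  jordanWigner_anticommute_of_eq_zMat fun _ hi => jwFactor_of_lt (hi.trans_lt h)

theorem jordanWigner_anticommute_conjTranspose_of_lt {j k : Fin n} (h : j < k) :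
    jordanWigner j * (jordanWigner k)ᴴ + (jordanWigner k)ᴴ * jordanWigner j = 0 := by
  rw [jordanWigner_conjTranspose]
  exact jordanWigner_anticommute_of_eq_zMat fun _ hi => by
    rw [jwFactor_of_lt (hi.trans_lt h), zMat_conjTranspose]

theorem jordanWigner_mul_self (j : Fin n) : jordanWigner j * jordanWigner j = 0 := by
  rw [jordanWigner_eq_piKronecker, piKronecker_mul]
  exact piKronecker_eq_zero (t := j) (by simp [jwFactor_self, annMat_mul_annMat])

theorem jordanWigner_car_self (j : Fin n) :
    jordanWigner j * (jordanWigner j)ᴴ + (jordanWigner j)ᴴ * jordanWigner j = 1 := by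
  rw [jordanWigner_conjTranspose, jordanWigner_eq_piKronecker, piKronecker_mul, piKronecker_mul,
    ← piKronecker_one]
  refine piKronecker_add_piKronecker j ?_ (fun i hi => ?_) (fun i hi => ?_)
  · simpa [jwFactor_self] using annMat_car
  · exact Unitary.mul_star_self_of_mem (jwFactor_mem_unitary_of_ne hi)
  · exact Unitary.star_mul_self_of_mem (jwFactor_mem_unitary_of_ne hi)

end JordanWigner

theorem jordanWigner_car_general {n : ℕ} (j k : Fin n) :
    jordanWigner j * jordanWigner k + jordanWigner k * jordanWigner j = 0 ∧
      jordanWigner j * (jordanWigner k)ᴴ + (jordanWigner k)ᴴ * jordanWigner j =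
        if j = k then 1 else 0 := by
  refine ⟨?_, ?_⟩
  · rcases lt_trichotomy j k with h | rfl | h
    · exact jordanWigner_anticommute_of_lt h
    · rw [jordanWigner_mul_self, add_zero]
    · rw [add_comm]
      exact jordanWigner_anticommute_of_lt h
  · split_ifs with h
    · subst h
      exact jordanWigner_car_self j
    · rcases Ne.lt_or_gt h with h | h
      · exact jordanWigner_anticommute_conjTranspose_of_lt h
      · simpa [add_comm] using
          congrArg conjTranspose (jordanWigner_anticommute_conjTranspose_of_lt h)

/-- **Canonical anticommutation relations for the Jordan–Wigner operators.**
For `n ≥ 1` and all `j k : Fin n`: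
(1) `c_j c_k + c_k c_j = 0`, and
(2) `c_j c_k† + c_k† c_j = 1` if `j = k` and `0` otherwise. -/
theorem jordanWigner_car {n : ℕ} (hn : 1 ≤ n) (j k : Fin n) :
    jordanWigner j * jordanWigner k + jordanWigner k * jordanWigner j = 0 ∧
      jordanWigner j * (jordanWigner k)ᴴ + (jordanWigner k)ᴴ * jordanWigner j =
        if j = k then 1 else 0 :=
  jordanWigner_car_general j k
end

section
/- Let θ be a real number and let S = [[1,0],[0,i]] be the phase gate. Then exp(−i θ • (X ⊗ X ⊗ Y ⊗ Y)) = (I ⊗ I ⊗ S ⊗ S) · exp(−i θ • (X ⊗ X ⊗ X ⊗ X)) · (I ⊗ I ⊗ S^† ⊗ S^†), where ⊗ is the Kronecker product, I the 2×2 identity, and † the conjugate transpose. -/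
/-! The phase gate is unitary and conjugates `X` to `Y`; conjugation by a Kronecker product of
gates acts factorwise, and the matrix exponential commutes with conjugation by an invertible
matrix. -/

open scoped Matrix Kronecker

namespace Matrix

variable {m n : Type*}

theorem exp_conj_of_mul_eq_one {𝔸 : Type*} [NormedCommRing 𝔸] [NormedAlgebra ℚ 𝔸]
    [CompleteSpace 𝔸] [Fintype m] [DecidableEq m] {V W : Matrix m m 𝔸} (h : V * W = 1)
    (A : Matrix m m 𝔸) :
    NormedSpace.exp (V * A * W) = V * NormedSpace.exp A * W := by
  rw [← inv_eq_right_inv h, exp_conj V A (.of_mul_eq_one W h)]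

variable {α : Type*} [CommSemiring α] [Fintype m] [Fintype n]

theorem kronecker_mul_kronecker_mul_kronecker {m' n' l' p' : Type*} [Fintype m'] [Fintype n']
    {l p : Type*} (V₁ : Matrix l m α) (A₁ : Matrix m n α) (W₁ : Matrix n p α)
    (V₂ : Matrix l' m' α) (A₂ : Matrix m' n' α) (W₂ : Matrix n' p' α) :
    (V₁ ⊗ₖ V₂) * (A₁ ⊗ₖ A₂) * (W₁ ⊗ₖ W₂) = (V₁ * A₁ * W₁) ⊗ₖ (V₂ * A₂ * W₂) := by
  rw [← mul_kronecker_mul, ← mul_kronecker_mul]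

theorem kronecker_mul_kronecker_eq_one [DecidableEq m] [DecidableEq n]
    {V₁ W₁ : Matrix m m α} {V₂ W₂ : Matrix n n α} (h₁ : V₁ * W₁ = 1) (h₂ : V₂ * W₂ = 1) :
    (V₁ ⊗ₖ V₂) * (W₁ ⊗ₖ W₂) = 1 := by
  rw [← mul_kronecker_mul, h₁, h₂, one_kronecker_one]

end Matrix

open Matrix

theorem phaseGate_mul_conjTranspose :
    !![1, 0; 0, Complex.I] * !![1, 0; 0, Complex.I]ᴴ = 1 := by
  ext i j; fin_cases i <;> fin_cases j <;> simp [Matrix.mul_apply]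

theorem phaseGate_conj_pauliX :
    !![1, 0; 0, Complex.I] * !![0, 1; 1, 0] * !![1, 0; 0, Complex.I]ᴴ =
      !![0, -Complex.I; Complex.I, 0] := by
  ext i j; fin_cases i <;> fin_cases j <;> simp [Matrix.mul_apply]

/-- **Correctness of the synthesized circuit for the Pauli string `XXYY`.**
With `S = [[1,0],[0,i]]` the phase gate, conjugating the `XXXX` simulation by `S`
gates on the last two qubits implements `exp (-i θ (X ⊗ X ⊗ Y ⊗ Y))`:
`exp (-i θ (X⊗X⊗Y⊗Y)) = (I⊗I⊗S⊗S) * exp (-i θ (X⊗X⊗X⊗X)) * (I⊗I⊗S†⊗S†)`. -/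
theorem xxyy_circuit_correct (θ : ℝ)
    (X Y I S : Matrix (Fin 2) (Fin 2) ℂ)
    (hX : X = !![0, 1; 1, 0]) (hY : Y = !![0, -Complex.I; Complex.I, 0])
    (hI : I = !![1, 0; 0, 1]) (hS : S = !![1, 0; 0, Complex.I]) :
    NormedSpace.exp ((-(Complex.I * θ)) • (((X ⊗ₖ X) ⊗ₖ Y) ⊗ₖ Y)) =
      (((I ⊗ₖ I) ⊗ₖ S) ⊗ₖ S) *
        NormedSpace.exp ((-(Complex.I * θ)) • (((X ⊗ₖ X) ⊗ₖ X) ⊗ₖ X)) *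
        (((I ⊗ₖ I) ⊗ₖ Sᴴ) ⊗ₖ Sᴴ) := by
  rw [← one_fin_two] at hI
  have hSS : S * Sᴴ = 1 := hS ▸ phaseGate_mul_conjTranspose
  have hSXS : S * X * Sᴴ = Y := hS ▸ hX ▸ hY ▸ phaseGate_conj_pauliX
  have hIX : I * X * I = X := by rw [hI, mul_one, one_mul]
  have hVW : ((I ⊗ₖ I) ⊗ₖ S ⊗ₖ S) * ((I ⊗ₖ I) ⊗ₖ Sᴴ ⊗ₖ Sᴴ) = 1 := by
    have hII : I * I = 1 := by rw [hI, mul_one]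
    exact kronecker_mul_kronecker_eq_one
      (kronecker_mul_kronecker_eq_one (kronecker_mul_kronecker_eq_one hII hII) hSS) hSS
  rw [← exp_conj_of_mul_eq_one hVW, Matrix.mul_smul, Matrix.smul_mul,
    kronecker_mul_kronecker_mul_kronecker, kronecker_mul_kronecker_mul_kronecker,
    kronecker_mul_kronecker_mul_kronecker, hSXS, hIX]
end

section
/- Let ψ be the complex column 2-vector with entries (−sin(π/8), cos(π/8)) and let ψψ^† denote the 2×2 matrix whose (j,k) entry is ψ_j · conj(ψ_k). Then exp(−i π • (ψψ^†)) = (1/√2)·[[1,1],[1,−1]], the Hadamard matrix. -/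
/-!
Since `ψ` is a unit vector, `P = ψψ†` is idempotent, so the exponential series collapses to
`exp (t • P) = (1 - P) + eᵗ • P`; at `t = -iπ` this is the reflection `1 - 2P`. For
`ψ = (-sin θ, cos θ)` that reflection is `[[cos 2θ, sin 2θ], [sin 2θ, -cos 2θ]]`, and `θ = π/8`
gives the Hadamard matrix.
-/

open NormedSpace Matrix

theorem NormedSpace.exp_smul_of_isIdempotentElem {𝕂 𝔸 : Type*} [RCLike 𝕂] [NormedRing 𝔸]
    [NormedAlgebra 𝕂 𝔸] [CompleteSpace 𝔸] {P : 𝔸} (hP : IsIdempotentElem P) (t : 𝕂) :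
    exp (t • P) = 1 - P + exp t • P := by
  have hsum := (hasSum_pi_single (0 : ℕ) (1 - P)).add
    ((exp_series_hasSum_exp' (𝕂 := 𝕂) t).smul_const P)
  refine (exp_series_hasSum_exp' (𝕂 := 𝕂) (t • P)).unique (hsum.congr_fun fun n => ?_)
  -- `(t • P) ^ n = t ^ n • P` for `n ≥ 1`; the `n = 0` term `1` is `(1 - P) + t ^ 0 • P`.
  rcases n with _ | n
  · simp
  · simp [smul_pow, hP.pow_succ_eq, smul_smul]

theorem NormedSpace.exp_neg_pi_I_smul_of_isIdempotentElem {𝔸 : Type*} [NormedRing 𝔸]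
    [NormedAlgebra ℂ 𝔸] [CompleteSpace 𝔸] {P : 𝔸} (hP : IsIdempotentElem P) :
    exp ((-(Complex.I * Real.pi)) • P) = 1 - 2 • P := by
  have hexp : exp (-(Complex.I * Real.pi)) = -1 := by
    rw [← Complex.exp_eq_exp_ℂ, mul_comm, Complex.exp_neg, Complex.exp_pi_mul_I, inv_neg, inv_one]
  rw [exp_smul_of_isIdempotentElem hP, hexp, neg_one_smul, two_nsmul]
  abel

theorem Matrix.isIdempotentElem_vecMulVec {n R : Type*} [Fintype n] [Semiring R]
    {u v : n → R} (h : v ⬝ᵥ u = 1) : IsIdempotentElem (vecMulVec u v) := by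
  rw [IsIdempotentElem, vecMulVec_mul_vecMulVec, h, one_smul]

theorem Matrix.exp_neg_pi_I_smul_of_isIdempotentElem {n : Type*} [Fintype n] [DecidableEq n]
    {P : Matrix n n ℂ} (hP : IsIdempotentElem P) :
    exp ((-(Complex.I * Real.pi)) • P) = 1 - 2 • P :=
  open scoped Norms.Operator in NormedSpace.exp_neg_pi_I_smul_of_isIdempotentElem hP

noncomputable def mirrorNormal (θ : ℝ) : Fin 2 → ℂ :=
  ![-(Real.sin θ : ℂ), (Real.cos θ : ℂ)]

section Reflection

variable (θ : ℝ)

theorem star_mirrorNormal : star (mirrorNormal θ) = mirrorNormal θ := by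
  ext i
  fin_cases i <;> simp [mirrorNormal, ← Complex.sin_conj, ← Complex.cos_conj]

theorem dotProduct_mirrorNormal_self : mirrorNormal θ ⬝ᵥ mirrorNormal θ = 1 := by
  simp [mirrorNormal, dotProduct, Fin.sum_univ_two, ← sq]

theorem one_sub_two_smul_vecMulVec_mirrorNormal :
    1 - 2 • vecMulVec (mirrorNormal θ) (mirrorNormal θ) =
      !![(Real.cos (2 * θ) : ℂ), Real.sin (2 * θ); Real.sin (2 * θ), -Real.cos (2 * θ)] := by
  ext i j
  fin_cases i <;> fin_cases j <;>
    simp [mirrorNormal, Complex.sin_two_mul, Complex.cos_two_mul, Complex.cos_sq', ← sq] <;> ring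

end Reflection

/-- **Hadamard gate as a Hamiltonian simulation.**
Let `ψ = (-sin (π/8), cos (π/8))` be the eigenvector of the Hadamard matrix and
`ψψ† ` its rank-one outer product.  Then simulating the Hamiltonian `ψψ†` for time
`π` gives the Hadamard gate: `exp (-i π (ψψ†)) = (1/√2) [[1,1],[1,-1]]`. -/
theorem hadamard_gate_synthesis
    (ψ : Fin 2 → ℂ)
    (hψ : ψ = ![-(Real.sin (Real.pi / 8) : ℂ), (Real.cos (Real.pi / 8) : ℂ)]) :
    NormedSpace.exp
        ((-(Complex.I * Real.pi)) •
          (Matrix.of fun j k : Fin 2 => ψ j * (starRingEnd ℂ) (ψ k))) =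
      ((Real.sqrt 2 : ℂ))⁻¹ • !![1, 1; 1, -1] := by
  subst hψ
  change exp (_ • vecMulVec (mirrorNormal (Real.pi / 8)) (star (mirrorNormal (Real.pi / 8)))) = _
  rw [star_mirrorNormal, Matrix.exp_neg_pi_I_smul_of_isIdempotentElem
    (isIdempotentElem_vecMulVec (dotProduct_mirrorNormal_self _)),
    one_sub_two_smul_vecMulVec_mirrorNormal, show 2 * (Real.pi / 8) = Real.pi / 4 by ring,
    Real.cos_pi_div_four, Real.sin_pi_div_four, Real.sqrt_div_self]
  ext i j
  fin_cases i <;> fin_cases j <;> simp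
end
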